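/- arXiv:1709.00684 — 3 statements merged into one kernel-verified Lean document; each statement's English description precedes it below -/
import Mathlib

section
/- Let R be a commutative ring in which 2 is invertible, let W ∈ R, and let P₁, P₂ be R-modules equipped with R-linear endomorphisms D₁, D₂ satisfying D₁ ∘ D₁ = W • id_{P₁} and D₂ ∘ D₂ = W • id_{P₂}. If f : P₁ → P₂ is an R-linear map which is closed in the even part of the Hom complex, i.e. D₂ ∘ f = f ∘ D₁, then W • f is exact: W • f = D₂ ∘ h + h ∘ D₁ for the R-linear map h = (1/2) • (D₂ ∘ f). -/
/-- Multiplication by the superpotential `W` annihilates the even cohomology of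
the Hom complex of two factorizations of `W`: if `2` is invertible in `R` and
`f` is an even closed morphism (`D₂ ∘ f = f ∘ D₁`), then `W • f` is exact, with
explicit primitive `h = (1/2) • (D₂ ∘ f)`. -/
theorem superpotential_annihilates_cohomology
    {R : Type*} [CommRing R] [Invertible (2 : R)] {P₁ P₂ : Type*}
    [AddCommGroup P₁] [Module R P₁] [AddCommGroup P₂] [Module R P₂]
    (W : R) (D₁ : P₁ →ₗ[R] P₁) (D₂ : P₂ →ₗ[R] P₂)
    (h₁ : D₁ ∘ₗ D₁ = W • (LinearMap.id : P₁ →ₗ[R] P₁))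
    (h₂ : D₂ ∘ₗ D₂ = W • (LinearMap.id : P₂ →ₗ[R] P₂))
    (f : P₁ →ₗ[R] P₂) (hf : D₂ ∘ₗ f = f ∘ₗ D₁) :
    W • f = D₂ ∘ₗ ((⅟(2 : R)) • (D₂ ∘ₗ f)) + ((⅟(2 : R)) • (D₂ ∘ₗ f)) ∘ₗ D₁ := by
  have e1 : D₂ ∘ₗ ((⅟(2 : R)) • (D₂ ∘ₗ f)) = (⅟(2 : R)) • (W • f) := by
    rw [LinearMap.comp_smul, ← LinearMap.comp_assoc, h₂]
    ext x; simp
  have e2 : ((⅟(2 : R)) • (D₂ ∘ₗ f)) ∘ₗ D₁ = (⅟(2 : R)) • (W • f) := by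
    rw [LinearMap.smul_comp, LinearMap.comp_assoc, ← hf, ← LinearMap.comp_assoc, h₂]
    ext x; simp
  rw [e1, e2, ← smul_add, ← two_smul R, smul_smul, invOf_mul_self, one_smul]
end

section
/- Let O(ℂ) denote the ℂ-algebra of entire functions ℂ → ℂ (with pointwise operations), and let W : ℂ → ℂ be entire and non-constant, with finite critical set Z_W = { z : deriv W z = 0 }. Then: (i) multiplication by deriv W is injective on O(ℂ) (so the Koszul complex 0 → O(ℂ) → O(ℂ) → 0 of W, whose differential is multiplication by deriv W, has vanishing cohomology in degree −1); and (ii) the Jacobi algebra Jac(ℂ, W) = O(ℂ)/(deriv W), the quotient of O(ℂ) by the ideal generated by deriv W, is a finite-dimensional ℂ-vector space. -/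
set_option synthInstance.maxHeartbeats 1000000
set_option maxHeartbeats 1000000


/-- The `ℂ`-algebra `O(ℂ)` of entire functions `ℂ → ℂ`, realized as a
subalgebra of `ℂ → ℂ` with pointwise operations. -/
def Entire : Subalgebra ℂ (ℂ → ℂ) where
  carrier := {f | Differentiable ℂ f}
  mul_mem' hf hg := hf.mul hg
  one_mem' := differentiable_const 1
  add_mem' hf hg := hf.add hg
  zero_mem' := differentiable_const 0
  algebraMap_mem' c := differentiable_const c

/-- The derivative of an entire function is entire. -/
theorem deriv_mem_Entire {W : ℂ → ℂ} (hW : Differentiable ℂ W) :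
    deriv W ∈ Entire :=
  Complex.analyticOnNhd_univ_iff_differentiable.mp
    (Complex.analyticOnNhd_univ_iff_differentiable.mpr hW).deriv

open Set Filter

lemma Entire.diff (D : Entire) : Differentiable ℂ (D : ℂ → ℂ) := D.2

lemma Entire.analyticAt (D : Entire) (z : ℂ) : AnalyticAt ℂ (D : ℂ → ℂ) z :=
  (Complex.analyticOnNhd_univ_iff_differentiable.mpr (Entire.diff D)) z (Set.mem_univ z)

lemma Entire.coe_mul (f g : Entire) (z : ℂ) :
    ((f * g : Entire) : ℂ → ℂ) z = (f : ℂ → ℂ) z * (g : ℂ → ℂ) z := rfl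

lemma Entire.coe_sub (f g : Entire) (z : ℂ) :
    ((f - g : Entire) : ℂ → ℂ) z = (f : ℂ → ℂ) z - (g : ℂ → ℂ) z := rfl

lemma Entire.coe_smul (c : ℂ) (f : Entire) (z : ℂ) :
    ((c • f : Entire) : ℂ → ℂ) z = c * (f : ℂ → ℂ) z := rfl

lemma Entire.coe_algebraMap (c : ℂ) (z : ℂ) :
    ((algebraMap ℂ Entire c : Entire) : ℂ → ℂ) z = c := rfl

/-- The order of vanishing (as a natural number) of an entire function at a point. -/
noncomputable def ordN (D : Entire) (z : ℂ) : ℕ := (analyticOrderAt (D : ℂ → ℂ) z).toNat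

/-- If the zero set of an entire function is finite, its order at each point is finite. -/
lemma order_ne_top {D : Entire} (hfin : {z : ℂ | (D : ℂ → ℂ) z = 0}.Finite) (z : ℂ) :
    analyticOrderAt (D : ℂ → ℂ) z ≠ ⊤ := by
  intro h
  rw [analyticOrderAt_eq_top] at h
  have hmem : {w : ℂ | (D : ℂ → ℂ) w = 0} ∈ nhds z := Filter.eventually_iff.mp h
  exact (infinite_of_mem_nhds z hmem) hfin

/-- A continuous function vanishing off a finite set vanishes everywhere. -/
lemma eq_zero_of_eq_zero_off_finite {h : ℂ → ℂ} (hc : Continuous h)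
    {Z : Set ℂ} (hZ : Z.Finite) (hv : ∀ z ∉ Z, h z = 0) : ∀ z, h z = 0 := by
  intro z
  have hev : ∀ᶠ w in nhdsWithin z {z}ᶜ, h w = 0 := by
    have hopen : IsOpen (Z \ {z})ᶜ := (hZ.subset diff_subset).isClosed.isOpen_compl
    have hmem : (Z \ {z})ᶜ ∈ nhds z := hopen.mem_nhds (by simp)
    filter_upwards [mem_nhdsWithin_of_mem_nhds hmem, self_mem_nhdsWithin] with w hw hwne
    exact hv w (fun hwZ => hw ⟨hwZ, hwne⟩)
  have h1 : Tendsto h (nhdsWithin z {z}ᶜ) (nhds 0) :=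
    Tendsto.congr' (hev.mono fun w hw => hw.symm) tendsto_const_nhds
  have h2 : Tendsto h (nhdsWithin z {z}ᶜ) (nhds (h z)) :=
    (hc.tendsto z).mono_left nhdsWithin_le_nhds
  exact tendsto_nhds_unique h2 h1

/-- Division by a root: if an entire function vanishes at `a`, it factors as
`(z - a)` times an entire function. -/
lemma exists_factor (D : Entire) (a : ℂ) (ha : (D : ℂ → ℂ) a = 0) :
    ∃ E : Entire, ∀ z, (D : ℂ → ℂ) z = (z - a) * (E : ℂ → ℂ) z := by
  have hdiff : Differentiable ℂ (dslope (D : ℂ → ℂ) a) := by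
    intro b
    rcases eq_or_ne b a with rfl | hb
    · obtain ⟨p, hp⟩ := Entire.analyticAt D b
      exact hp.has_fpower_series_dslope_fslope.analyticAt.differentiableAt
    · exact (differentiableAt_dslope_of_ne hb).mpr (Entire.diff D b)
  refine ⟨⟨dslope (D : ℂ → ℂ) a, hdiff⟩, fun z => ?_⟩
  have := sub_smul_dslope (D : ℂ → ℂ) a z
  rw [ha, sub_zero, smul_eq_mul] at this
  exact this.symm

/-- Order bookkeeping for a factorization `D = (z - a) * E`. -/
lemma order_factor {D E : Entire} {a : ℂ}
    (hDE : ∀ z, (D : ℂ → ℂ) z = (z - a) * (E : ℂ → ℂ) z)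
    (hfinE : {z : ℂ | (E : ℂ → ℂ) z = 0}.Finite) (z : ℂ) :
    analyticOrderAt (D : ℂ → ℂ) z = analyticOrderAt (E : ℂ → ℂ) z + (if z = a then 1 else 0) := by
  set n : ℕ := ordN E z with hn
  have hEn : analyticOrderAt (E : ℂ → ℂ) z = (n : ℕ∞) :=
    (ENat.coe_toNat (order_ne_top hfinE z)).symm
  obtain ⟨g, hg, hgz, hev⟩ := ((Entire.analyticAt E z).analyticOrderAt_eq_natCast (n := n)).mp hEn
  rcases eq_or_ne z a with rfl | hz
  · have : analyticOrderAt (D : ℂ → ℂ) z = ((n + 1 : ℕ) : ℕ∞) := by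
      refine ((Entire.analyticAt D z).analyticOrderAt_eq_natCast (n := n + 1)).mpr ⟨g, hg, hgz, ?_⟩
      filter_upwards [hev] with w hw
      rw [hDE w, hw]
      simp only [smul_eq_mul]
      ring
    rw [this, hEn, if_pos rfl]
    push_cast
    rfl
  · have : analyticOrderAt (D : ℂ → ℂ) z = ((n : ℕ) : ℕ∞) := by
      refine ((Entire.analyticAt D z).analyticOrderAt_eq_natCast (n := n)).mpr
        ⟨fun w => (w - a) * g w, ((analyticAt_id.sub analyticAt_const).mul hg),
          mul_ne_zero (sub_ne_zero.mpr hz) hgz, ?_⟩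
      filter_upwards [hev] with w hw
      rw [hDE w, hw]
      simp only [smul_eq_mul]
      ring
    rw [this, hEn, if_neg hz, add_zero]

lemma ordN_factor {D E : Entire} {a : ℂ}
    (hDE : ∀ z, (D : ℂ → ℂ) z = (z - a) * (E : ℂ → ℂ) z)
    (hfinE : {z : ℂ | (E : ℂ → ℂ) z = 0}.Finite) (z : ℂ) :
    ordN D z = ordN E z + (if z = a then 1 else 0) := by
  have h1 := order_factor hDE hfinE z
  have h2 : analyticOrderAt (E : ℂ → ℂ) z = ((ordN E z : ℕ) : ℕ∞) :=
    (ENat.coe_toNat (order_ne_top hfinE z)).symm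
  unfold ordN
  rw [h1, h2]
  split_ifs with h
  · rw [show ((ordN E z : ℕ) : ℕ∞) + 1 = ((ordN E z + 1 : ℕ) : ℕ∞) from by
      rw [Nat.cast_add, Nat.cast_one], ENat.toNat_coe]
    simp
  · simp

/-- The key spanning lemma, by induction on the total order of vanishing. -/
lemma span_aux (n : ℕ) : ∀ (D : Entire) (hfinD : {z : ℂ | (D : ℂ → ℂ) z = 0}.Finite),
    (∑ z ∈ hfinD.toFinset, ordN D z) ≤ n →
    ∃ s : Finset Entire, ∀ f : Entire,
      ∃ g ∈ Submodule.span ℂ (s : Set Entire), f - g ∈ Ideal.span {D} := by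
  induction n using Nat.strong_induction_on with
  | _ n IH =>
  intro D hfinD hsum
  classical
  by_cases hZ : ∀ z, (D : ℂ → ℂ) z ≠ 0
  · -- D never vanishes: the ideal is everything
    refine ⟨∅, fun f => ⟨0, Submodule.zero_mem _, ?_⟩⟩
    rw [sub_zero]
    refine Ideal.mem_span_singleton'.mpr
      ⟨⟨fun z => (f : ℂ → ℂ) z / (D : ℂ → ℂ) z, (Entire.diff f).div (Entire.diff D) hZ⟩, ?_⟩
    refine Subtype.ext (funext fun z => ?_)
    exact div_mul_cancel₀ _ (hZ z)
  · push_neg at hZ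
    obtain ⟨a, ha⟩ := hZ
    obtain ⟨E, hDE⟩ := exists_factor D a ha
    have hsub : {z : ℂ | (E : ℂ → ℂ) z = 0} ⊆ {z : ℂ | (D : ℂ → ℂ) z = 0} := by
      intro z hz
      simp only [Set.mem_setOf_eq] at hz ⊢
      rw [hDE z, hz, mul_zero]
    have hfinE : {z : ℂ | (E : ℂ → ℂ) z = 0}.Finite := hfinD.subset hsub
    have hamem : a ∈ hfinD.toFinset := hfinD.mem_toFinset.mpr ha
    have hsumD : (∑ z ∈ hfinD.toFinset, ordN D z)
        = (∑ z ∈ hfinD.toFinset, ordN E z) + 1 := by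
      have : ∀ z ∈ hfinD.toFinset, ordN D z = ordN E z + (if z = a then 1 else 0) :=
        fun z _ => ordN_factor hDE hfinE z
      rw [Finset.sum_congr rfl this, Finset.sum_add_distrib,
        Finset.sum_ite_eq' hfinD.toFinset a (fun _ => 1), if_pos hamem]
    have hn1 : 1 ≤ n := by omega
    have hsumE : (∑ z ∈ hfinE.toFinset, ordN E z) ≤ n - 1 := by
      have hle : (∑ z ∈ hfinE.toFinset, ordN E z) ≤ ∑ z ∈ hfinD.toFinset, ordN E z :=
        Finset.sum_le_sum_of_subset (Set.Finite.toFinset_subset_toFinset.mpr hsub)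
      omega
    obtain ⟨s, hs⟩ := IH (n - 1) (by omega) E hfinE hsumE
    refine ⟨insert E s, fun f => ?_⟩
    obtain ⟨g, hg, hfg⟩ := hs f
    obtain ⟨h, hh⟩ := Ideal.mem_span_singleton'.mp hfg
    set c : ℂ := (h : ℂ → ℂ) a with hc
    have hzero : ((h - algebraMap ℂ Entire c : Entire) : ℂ → ℂ) a = 0 := by
      rw [Entire.coe_sub, Entire.coe_algebraMap, sub_self]
    obtain ⟨k, hk⟩ := exists_factor _ a hzero
    refine ⟨g + c • E, ?_, ?_⟩
    · exact Submodule.add_mem _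
        (Submodule.span_mono (Finset.coe_subset.mpr (Finset.subset_insert E s)) hg)
        (Submodule.smul_mem _ _ (Submodule.subset_span
          (Finset.mem_coe.mpr (Finset.mem_insert_self E s))))
    · refine Ideal.mem_span_singleton'.mpr ⟨k, ?_⟩
      refine Subtype.ext (funext fun z => ?_)
      have h1 : (h : ℂ → ℂ) z * (E : ℂ → ℂ) z = ((f : ℂ → ℂ) z - (g : ℂ → ℂ) z) := by
        have := congrArg (fun u : Entire => (u : ℂ → ℂ) z) hh
        simpa [Entire.coe_mul, Entire.coe_sub] using this
      have h2 : (h : ℂ → ℂ) z - c = (z - a) * (k : ℂ → ℂ) z := by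
        have := hk z
        rwa [Entire.coe_sub, Entire.coe_algebraMap] at this
      show (k : ℂ → ℂ) z * (D : ℂ → ℂ) z
          = ((f - (g + c • E) : Entire) : ℂ → ℂ) z
      rw [hDE z]
      have h3 : ((f - (g + c • E) : Entire) : ℂ → ℂ) z
          = (f : ℂ → ℂ) z - ((g : ℂ → ℂ) z + c * (E : ℂ → ℂ) z) := rfl
      rw [h3]
      linear_combination h1 - (E : ℂ → ℂ) z * h2

set_option synthInstance.maxHeartbeats 1000000 in
/-- For an entire non-constant `W : ℂ → ℂ` with finite critical set:
(i) multiplication by `deriv W` is injective on `O(ℂ)` (so the Koszul complex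
`0 → O(ℂ) → O(ℂ) → 0` of `W` has vanishing cohomology in degree `−1`), and
(ii) the Jacobi algebra `Jac(ℂ, W) = O(ℂ)/(deriv W)` is a finite-dimensional
`ℂ`-vector space. -/
theorem koszul_injective_and_jacobi_finite_dimensional
    (W : ℂ → ℂ) (hW : Differentiable ℂ W) (hnc : ¬ ∃ c : ℂ, ∀ z : ℂ, W z = c)
    (hfin : {z : ℂ | deriv W z = 0}.Finite) :
    Function.Injective
      (fun g : Entire => (⟨deriv W, deriv_mem_Entire hW⟩ : Entire) * g) ∧
    FiniteDimensional ℂ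
      (Entire ⧸ Ideal.span {(⟨deriv W, deriv_mem_Entire hW⟩ : Entire)}) := by
  set D : Entire := ⟨deriv W, deriv_mem_Entire hW⟩ with hD
  have hfinD : {z : ℂ | (D : ℂ → ℂ) z = 0}.Finite := hfin
  constructor
  · intro g₁ g₂ hgg
    have hpt : ∀ z, (D : ℂ → ℂ) z * ((g₁ - g₂ : Entire) : ℂ → ℂ) z = 0 := by
      intro z
      have hgg' : D * g₁ = D * g₂ := hgg
      have := congrArg (fun u : Entire => (u : ℂ → ℂ) z) hgg'
      simp only [Entire.coe_mul] at this
      rw [Entire.coe_sub, mul_sub, this, sub_self]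
    have hzero : ∀ z, ((g₁ - g₂ : Entire) : ℂ → ℂ) z = 0 := by
      refine eq_zero_of_eq_zero_off_finite
        ((Entire.diff (g₁ - g₂ : Entire)).continuous) hfinD (fun z hz => ?_)
      have hDz : (D : ℂ → ℂ) z ≠ 0 := hz
      exact (mul_eq_zero.mp (hpt z)).resolve_left hDz
    have : g₁ - g₂ = 0 := Subtype.ext (funext hzero)
    exact sub_eq_zero.mp this
  · obtain ⟨s, hs⟩ := span_aux (∑ z ∈ hfinD.toFinset, ordN D z) D hfinD le_rfl
    set I : Ideal Entire := Ideal.span {D} with hI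
    let π : Entire →ₗ[ℂ] (Entire ⧸ I) := (Ideal.Quotient.mkₐ ℂ I).toLinearMap
    have hspan : (⊤ : Submodule ℂ (Entire ⧸ I))
        ≤ Submodule.span ℂ (π '' (s : Set Entire)) := by
      rintro q -
      obtain ⟨f, rfl⟩ := Ideal.Quotient.mk_surjective (I := I) q
      obtain ⟨g, hg, hfg⟩ := hs f
      have hπ : π f = π g := by
        have : π (f - g) = 0 := by
          simp only [π, AlgHom.toLinearMap_apply, Ideal.Quotient.mkₐ_eq_mk,
            Ideal.Quotient.eq_zero_iff_mem]
          exact hfg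
        rw [map_sub, sub_eq_zero] at this
        exact this
      show π f ∈ Submodule.span ℂ (π '' (s : Set Entire))
      rw [hπ, Submodule.span_image]
      exact Submodule.mem_map_of_mem hg
    have hfg : (⊤ : Submodule ℂ (Entire ⧸ I)).FG := by
      rw [Submodule.fg_def]
      exact ⟨π '' (s : Set Entire), s.finite_toSet.image _, le_antisymm le_top hspan⟩
    exact ⟨hfg⟩
end

section
/- Let O(ℂ) denote the ℂ-algebra of entire functions ℂ → ℂ, and let W : ℂ → ℂ be entire and non-constant with finite critical set Z_W = { z : deriv W z = 0 }. Then the dimension of the Jacobi algebra over ℂ equals the total multiplicity of the critical points: dim_ℂ ( O(ℂ)/(deriv W) ) = ∑_{a ∈ Z_W} m_a, where m_a is the order of vanishing of deriv W at a and (deriv W) denotes the ideal of O(ℂ) generated by deriv W. -/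
open Polynomial Filter


/-- Local division: analytic function vanishing at `a` factors as `(z-a) * ψ` near `a`. -/
lemma div1 {φ : ℂ → ℂ} {a : ℂ} (hφ : AnalyticAt ℂ φ a) (h0 : φ a = 0) :
    ∃ ψ : ℂ → ℂ, AnalyticAt ℂ ψ a ∧ ∀ᶠ z in nhds a, φ z = (z - a) * ψ z := by
  rcases eq_or_ne (analyticOrderAt φ a) ⊤ with h | h
  · refine ⟨0, analyticAt_const, ?_⟩
    filter_upwards [analyticOrderAt_eq_top.mp h] with z hz
    simp [hz]
  · lift analyticOrderAt φ a to ℕ using h with n hn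
    obtain ⟨g, hg, hga, hev⟩ := (hφ.analyticOrderAt_eq_natCast (n := n)).mp hn.symm
    rcases Nat.eq_zero_or_pos n with hn0 | hn0
    · exfalso
      have := hev.self_of_nhds
      rw [hn0] at this
      simp [h0] at this
      exact hga this.symm
    · refine ⟨fun z => (z - a) ^ (n - 1) * g z,
        (((analyticAt_id).sub analyticAt_const).pow _).mul hg, ?_⟩
      filter_upwards [hev] with z hz
      rw [hz, smul_eq_mul, ← mul_assoc, ← pow_succ', Nat.sub_add_cancel hn0]


/-- Global division of an entire function by `(z-a)^k` when it locally factors. -/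
lemma div_pow_global {h : ℂ → ℂ} (hh : Differentiable ℂ h) {a : ℂ} {k : ℕ}
    {g : ℂ → ℂ} (hg : AnalyticAt ℂ g a) (hev : ∀ᶠ z in nhds a, h z = (z - a) ^ k * g z) :
    ∃ q : ℂ → ℂ, Differentiable ℂ q ∧ ∀ z, h z = (z - a) ^ k * q z := by
  classical
  refine ⟨fun z => if z = a then g a else h z / (z - a) ^ k, ?_, ?_⟩
  · intro z
    by_cases hz : z = a
    · rw [hz]
      have heq : (fun w => if w = a then g a else h w / (w - a) ^ k) =ᶠ[nhds a] g := by
        filter_upwards [hev] with w hw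
        by_cases hwa : w = a
        · simp [hwa]
        · have hne : (w - a) ^ k ≠ 0 := pow_ne_zero _ (sub_ne_zero.mpr hwa)
          simp only [hwa, if_false, hw]
          field_simp
      exact (Filter.EventuallyEq.differentiableAt_iff heq).mpr hg.differentiableAt
    · have hopen : ∀ᶠ w in nhds z, w ≠ a := eventually_ne_nhds hz
      have heq : (fun w => if w = a then g a else h w / (w - a) ^ k)
          =ᶠ[nhds z] fun w => h w / (w - a) ^ k := by
        filter_upwards [hopen] with w hw; simp [hw]
      refine (Filter.EventuallyEq.differentiableAt_iff heq).mpr ?_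
      exact ((hh z).div (((differentiable_id.sub_const a).pow k) z)
        (pow_ne_zero _ (sub_ne_zero.mpr hz)))
  · intro z
    by_cases hz : z = a
    · rw [hz]
      beta_reduce
      rw [if_pos rfl]
      exact hev.self_of_nhds
    · have hne : (z - a) ^ k ≠ 0 := pow_ne_zero _ (sub_ne_zero.mpr hz)
      beta_reduce
      rw [if_neg hz]
      field_simp

/-- Global division by a product of `(z-a)^(m a)` factors. -/
lemma div_prod_global (m : ℂ → ℕ) (Z : Finset ℂ) :
    ∀ h : ℂ → ℂ, Differentiable ℂ h →
    (∀ a ∈ Z, ∃ g : ℂ → ℂ, AnalyticAt ℂ g a ∧ ∀ᶠ z in nhds a, h z = (z - a) ^ m a * g z) →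
    ∃ q : ℂ → ℂ, Differentiable ℂ q ∧ ∀ z, h z = (∏ a ∈ Z, (z - a) ^ m a) * q z := by
  induction Z using Finset.induction_on with
  | empty => exact fun h hh _ => ⟨h, hh, by simp⟩
  | @insert a s ha ih =>
    intro h hh hyp
    obtain ⟨g, hg, hev⟩ := hyp a (Finset.mem_insert_self a s)
    obtain ⟨q1, hq1d, hq1⟩ := div_pow_global hh hg hev
    have hyp' : ∀ b ∈ s, ∃ gb : ℂ → ℂ, AnalyticAt ℂ gb b ∧
        ∀ᶠ z in nhds b, q1 z = (z - b) ^ m b * gb z := by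
      intro b hb
      obtain ⟨gb, hgb, hgbev⟩ := hyp b (Finset.mem_insert_of_mem hb)
      have hba : b ≠ a := fun hba => ha (hba ▸ hb)
      refine ⟨fun z => gb z * ((z - a) ^ m a)⁻¹, ?_, ?_⟩
      · exact hgb.mul ((((analyticAt_id).sub analyticAt_const).pow _).inv
          (pow_ne_zero _ (sub_ne_zero.mpr hba)))
      · filter_upwards [hgbev, eventually_ne_nhds hba] with z hz hza
        have hne : (z - a) ^ m a ≠ 0 := pow_ne_zero _ (sub_ne_zero.mpr hza)
        have h1 : (z - a) ^ m a * q1 z = (z - b) ^ m b * gb z := by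
          rw [← hq1 z, hz]
        field_simp
        linear_combination h1
    obtain ⟨q, hqd, hq⟩ := ih q1 hq1d hyp'
    refine ⟨q, hqd, fun z => ?_⟩
    rw [Finset.prod_insert ha, mul_assoc, ← hq z, ← hq1 z]


/-- A polynomial that factors as `(z-a)^k * u` near `a` (punctured) with `u` continuous
is divisible by `(X - C a)^k`. -/
lemma poly_dvd_of_eventually {a : ℂ} {u : ℂ → ℂ} (hu : Continuous u) :
    ∀ (k : ℕ) (t : Polynomial ℂ),
    (∀ᶠ z in nhdsWithin a {a}ᶜ, t.eval z = (z - a) ^ k * u z) → (X - C a) ^ k ∣ t := by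
  intro k
  induction k with
  | zero => intro t _; simp
  | succ k ih =>
    intro t ht
    have hroot : t.IsRoot a := by
      have h1 : Tendsto (fun z => t.eval z) (nhdsWithin a {a}ᶜ) (nhds (t.eval a)) :=
        (t.continuous.tendsto a).mono_left nhdsWithin_le_nhds
      have h2 : Tendsto (fun z => (z - a) ^ (k + 1) * u z) (nhdsWithin a {a}ᶜ) (nhds 0) := by
        have hc : Continuous fun z : ℂ => (z - a) ^ (k + 1) * u z :=
          ((continuous_id.sub continuous_const).pow (k + 1)).mul hu
        have := hc.tendsto a
        simpa using this.mono_left nhdsWithin_le_nhds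
      have := tendsto_nhds_unique (h1.congr' ht) h2
      simpa [Polynomial.IsRoot] using this
    obtain ⟨t₁, ht₁⟩ := Polynomial.dvd_iff_isRoot.mpr hroot
    have ht₁ev : ∀ᶠ z in nhdsWithin a {a}ᶜ, t₁.eval z = (z - a) ^ k * u z := by
      filter_upwards [ht, self_mem_nhdsWithin] with z hz hza
      have hza' : z - a ≠ 0 := sub_ne_zero.mpr hza
      apply mul_left_cancel₀ hza'
      have : t.eval z = (z - a) * t₁.eval z := by
        rw [ht₁]; simp [mul_comm]
      rw [← this, hz]; ring
    obtain ⟨w, hw⟩ := ih t₁ ht₁ev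
    exact ⟨w, by rw [ht₁, hw]; ring⟩

/-- Taylor remainder: for `φ` analytic at `a` and any `k`, there is a polynomial `r`
such that `φ - r` factors as `(z-a)^k * g` near `a` with `g` analytic. -/
lemma taylor_remainder {φ : ℂ → ℂ} {a : ℂ} (hφ : AnalyticAt ℂ φ a) :
    ∀ k : ℕ, ∃ r : Polynomial ℂ, ∃ g : ℂ → ℂ, AnalyticAt ℂ g a ∧
      ∀ᶠ z in nhds a, φ z - r.eval z = (z - a) ^ k * g z := by
  intro k
  induction k with
  | zero => exact ⟨0, φ, hφ, by filter_upwards with z; simp⟩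
  | succ k ih =>
    obtain ⟨r, g, hg, hev⟩ := ih
    have hg0 : AnalyticAt ℂ (fun z => g z - g a) a := hg.sub analyticAt_const
    obtain ⟨ψ, hψ, hψev⟩ := div1 hg0 (by simp)
    refine ⟨r + C (g a) * (X - C a) ^ k, ψ, hψ, ?_⟩
    filter_upwards [hev, hψev] with z hz hz2
    have : φ z - (r + C (g a) * (X - C a) ^ k).eval z
        = (z - a) ^ k * (g z - g a) := by
      simp only [Polynomial.eval_add, Polynomial.eval_mul, Polynomial.eval_pow,
        Polynomial.eval_sub, Polynomial.eval_X, Polynomial.eval_C]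
      linear_combination hz
    rw [this, hz2]; ring

/-- Division with polynomial remainder for entire functions by `∏ (z-a)^(m a)`. -/
lemma exists_poly_remainder (m : ℂ → ℕ) (Z : Finset ℂ) :
    ∀ h : ℂ → ℂ, Differentiable ℂ h →
    ∃ r : Polynomial ℂ, ∃ q : ℂ → ℂ, Differentiable ℂ q ∧
      ∀ z, h z = r.eval z + (∏ a ∈ Z, (z - a) ^ m a) * q z := by
  induction Z using Finset.induction_on with
  | empty => exact fun h hh => ⟨0, h, hh, by simp⟩
  | @insert a s ha ih =>
    intro h hh
    have hha : AnalyticAt ℂ h a :=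
      (Complex.analyticOnNhd_univ_iff_differentiable.mpr hh) a (Set.mem_univ a)
    obtain ⟨ra, g, hg, hev⟩ := taylor_remainder hha (m a)
    have hφd : Differentiable ℂ (fun z => h z - ra.eval z) :=
      hh.sub ra.differentiable
    obtain ⟨q1, hq1d, hq1⟩ := div_pow_global hφd hg hev
    obtain ⟨r₁, q, hqd, hq⟩ := ih q1 hq1d
    refine ⟨ra + (X - C a) ^ m a * r₁, q, hqd, fun z => ?_⟩
    have h1 : h z = ra.eval z + (z - a) ^ m a * q1 z := by
      rw [← hq1 z]; ring
    rw [h1, hq z, Finset.prod_insert ha]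
    simp only [Polynomial.eval_add, Polynomial.eval_mul, Polynomial.eval_pow,
      Polynomial.eval_sub, Polynomial.eval_X, Polynomial.eval_C]
    ring

set_option synthInstance.maxHeartbeats 1000000 in
set_option maxHeartbeats 1000000 in
/-- For an entire non-constant `W : ℂ → ℂ` with finite critical set
`Z_W = {z | deriv W z = 0}` (given as a finset `Z`), the dimension over `ℂ` of
the Jacobi algebra `O(ℂ)/(deriv W)` equals the total multiplicity
`∑_{a ∈ Z_W} m_a` of the critical points, where `m_a` is the order of
vanishing of `deriv W` at `a`, i.e. the unique positive integer with
`deriv W (z) = (z − a)^{m_a} h(z)` near `a` for some analytic `h` with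
`h(a) ≠ 0`. -/
theorem jacobi_algebra_dimension_eq_total_multiplicity
    (W : ℂ → ℂ) (hW : Differentiable ℂ W) (hnc : ¬ ∃ c : ℂ, ∀ z : ℂ, W z = c)
    (Z : Finset ℂ) (hZ : ∀ z : ℂ, deriv W z = 0 ↔ z ∈ Z)
    (m : ℂ → ℕ)
    (hm : ∀ a ∈ Z, 0 < m a ∧ ∃ h : ℂ → ℂ, AnalyticAt ℂ h a ∧ h a ≠ 0 ∧
      ∀ᶠ z in nhds a, deriv W z = (z - a) ^ m a * h z) :
    Module.finrank ℂ
        (Entire ⧸ Ideal.span {(⟨deriv W, deriv_mem_Entire hW⟩ : Entire)}) =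
      ∑ a ∈ Z, m a := by
  classical
  have fd : Differentiable ℂ (deriv W) := deriv_mem_Entire hW
  set p : Polynomial ℂ := ∏ a ∈ Z, (X - C a) ^ m a with hp
  have hevalp : ∀ z, p.eval z = ∏ a ∈ Z, (z - a) ^ m a := by
    intro z; simp [hp, Polynomial.eval_prod]
  set Pe : Entire := ⟨fun z => p.eval z, p.differentiable⟩ with hPe
  -- factor deriv W = P * q with q entire and nonvanishing
  obtain ⟨q, qd, hq0⟩ := div_prod_global m Z (deriv W) fd (fun a ha =>
    let ⟨g, h1, _, h3⟩ := (hm a ha).2; ⟨g, h1, h3⟩)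
  have hq : ∀ z, deriv W z = p.eval z * q z := fun z => by rw [hq0 z, hevalp]
  have qne : ∀ z, q z ≠ 0 := by
    intro z
    by_cases hzZ : z ∈ Z
    · obtain ⟨-, ha, hana, hane, haev⟩ := hm z hzZ
      have hev2 : ∀ᶠ w in nhdsWithin z {z}ᶜ,
          ha w = (∏ b ∈ Z.erase z, (w - b) ^ m b) * q w := by
        filter_upwards [mem_nhdsWithin_of_mem_nhds haev, self_mem_nhdsWithin] with w hw hwz
        have hne : (w - z) ^ m z ≠ 0 :=
          pow_ne_zero _ (sub_ne_zero.mpr (Set.mem_compl_iff _ _ |>.mp hwz))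
        apply mul_left_cancel₀ hne
        rw [← hw, hq0 w, ← Finset.mul_prod_erase Z _ hzZ]
        ring
      have t1 : Filter.Tendsto ha (nhdsWithin z {z}ᶜ) (nhds (ha z)) :=
        hana.continuousAt.tendsto.mono_left nhdsWithin_le_nhds
      have hQc : Continuous fun w : ℂ => (∏ b ∈ Z.erase z, (w - b) ^ m b) * q w := by
        exact (continuous_finset_prod _ fun b _ =>
          (continuous_id.sub continuous_const).pow _).mul qd.continuous
      have t2 : Filter.Tendsto (fun w : ℂ => (∏ b ∈ Z.erase z, (w - b) ^ m b) * q w)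
          (nhdsWithin z {z}ᶜ)
          (nhds ((∏ b ∈ Z.erase z, (z - b) ^ m b) * q z)) :=
        (hQc.tendsto z).mono_left nhdsWithin_le_nhds
      have hkey : ha z = (∏ b ∈ Z.erase z, (z - b) ^ m b) * q z :=
        tendsto_nhds_unique (t1.congr' hev2) t2
      intro hqz
      exact hane (by rw [hkey, hqz, mul_zero])
    · have hfz : deriv W z ≠ 0 := fun h => hzZ ((hZ z).mp h)
      intro hqz
      exact hfz (by rw [hq z, hqz, mul_zero])
  set qe : Entire := ⟨q, qd⟩ with hqe
  have hmul : (⟨deriv W, deriv_mem_Entire hW⟩ : Entire) = Pe * qe := by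
    apply Subtype.ext; funext z; exact hq z
  have hspan : Ideal.span {(⟨deriv W, deriv_mem_Entire hW⟩ : Entire)} =
      Ideal.span {Pe} := by
    apply le_antisymm
    · rw [Ideal.span_singleton_le_span_singleton]
      exact ⟨qe, hmul⟩
    · rw [Ideal.span_singleton_le_span_singleton]
      refine ⟨⟨fun z => (q z)⁻¹, qd.inv qne⟩, ?_⟩
      apply Subtype.ext; funext z
      show p.eval z = deriv W z * (q z)⁻¹
      rw [hq z, mul_assoc, mul_inv_cancel₀ (qne z), mul_one]
  rw [hspan]
  -- the algebra map from polynomials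
  set ι : Entire := ⟨(id : ℂ → ℂ), differentiable_id⟩ with hι
  set Φ : Polynomial ℂ →ₐ[ℂ] Entire := Polynomial.aeval ι with hΦdef
  have hΦ : ∀ (r : Polynomial ℂ) (z : ℂ), (Φ r : ℂ → ℂ) z = r.eval z := by
    intro r z
    have h1 : ((Φ r : Entire) : ℂ → ℂ) = Polynomial.aeval (id : ℂ → ℂ) r := by
      rw [hΦdef, hι]
      exact Polynomial.coe_aeval_mk_apply (x := (id : ℂ → ℂ)) (p := r) (show (id : ℂ → ℂ) ∈ Entire from differentiable_id)
    rw [h1]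
    have h2 := Polynomial.aeval_algHom_apply
      (Pi.evalAlgHom ℂ (fun _ : ℂ => ℂ) z) (id : ℂ → ℂ) r
    have h3 : (Polynomial.aeval (id : ℂ → ℂ) r) z = Polynomial.aeval z r := h2.symm
    rw [h3]
    exact congrFun (Polynomial.coe_aeval_eq_eval z) r
  set I : Ideal Entire := Ideal.span {Pe} with hI
  set Ψ : Polynomial ℂ →ₐ[ℂ] (Entire ⧸ I) := (Ideal.Quotient.mkₐ ℂ I).comp Φ with hΨdef
  have hΨsurj : Function.Surjective Ψ := by
    intro x
    obtain ⟨he, rfl⟩ := Ideal.Quotient.mk_surjective x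
    obtain ⟨r, q', hq'd, heq⟩ := exists_poly_remainder m Z he he.2
    refine ⟨r, ?_⟩
    have hΨr : Ψ r = Ideal.Quotient.mk I (Φ r) := by
      rw [hΨdef]
      simp [Ideal.Quotient.mkₐ_eq_mk]
    rw [hΨr]
    have hsub : Φ r - he = -(Pe * ⟨q', hq'd⟩) := by
      apply Subtype.ext; funext z
      show (Φ r : ℂ → ℂ) z - (he : ℂ → ℂ) z = -(p.eval z * q' z)
      rw [hΦ r z, heq z, hevalp z]
      ring
    refine Ideal.Quotient.eq.mpr ?_
    rw [hsub]
    exact I.neg_mem (I.mul_mem_right _ (Ideal.mem_span_singleton_self Pe))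
  have hΦp : Φ p = Pe := by
    apply Subtype.ext; funext z; exact hΦ p z
  have hker : RingHom.ker Ψ = Ideal.span {p} := by
    ext r
    rw [RingHom.mem_ker, Ideal.mem_span_singleton]
    constructor
    · intro hr
      have hrI : Φ r ∈ I := by
        rw [← Ideal.Quotient.eq_zero_iff_mem]
        rw [hΨdef] at hr
        simpa [Ideal.Quotient.mkₐ_eq_mk] using hr
      obtain ⟨ue, hue⟩ := Ideal.mem_span_singleton.mp hrI
      have hpt : ∀ z, r.eval z = p.eval z * (ue : ℂ → ℂ) z := by
        intro z
        have h4 := congrFun (congrArg Subtype.val hue) z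
        rw [← hΦ r z]
        exact h4
      have hdvd : ∀ a ∈ Z, (X - C a) ^ m a ∣ r := by
        intro a haZ
        refine poly_dvd_of_eventually
          (u := fun z => (∏ b ∈ Z.erase a, (z - b) ^ m b) * (ue : ℂ → ℂ) z)
          ((continuous_finset_prod _ fun b _ =>
            (continuous_id.sub continuous_const).pow _).mul ue.2.continuous)
          (m a) r ?_
        refine Filter.Eventually.of_forall fun z => ?_
        rw [hpt z, hevalp z, ← Finset.mul_prod_erase Z _ haZ]
        ring
      have hpair : (↑Z : Set ℂ).Pairwise (Function.onFun IsCoprime fun a => (X - C a) ^ m a) := by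
        intro a _ b _ hab
        exact (Polynomial.pairwise_coprime_X_sub_C
          (Function.injective_id (α := ℂ)) hab).pow
      exact hp ▸ Finset.prod_dvd_of_coprime hpair (fun a ha => hdvd a ha)
    · rintro ⟨s, rfl⟩
      have hΨps : Ψ (p * s) = Ideal.Quotient.mk I (Φ (p * s)) := by
        rw [hΨdef]
        simp [Ideal.Quotient.mkₐ_eq_mk]
      rw [hΨps, map_mul, Ideal.Quotient.eq_zero_iff_mem, hΦp]
      exact I.mul_mem_right _ (Ideal.mem_span_singleton_self Pe)
  -- assemble
  have e := Ideal.quotientKerAlgEquivOfSurjective hΨsurj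
  replace e := (Ideal.quotientEquivAlgOfEq ℂ hker).symm.trans e
  have h5 : Module.finrank ℂ (Entire ⧸ I) =
      Module.finrank ℂ (Polynomial ℂ ⧸ Ideal.span {p}) :=
    (LinearEquiv.finrank_eq e.toLinearEquiv).symm
  rw [h5]
  have hpm : p.Monic := Polynomial.monic_prod_of_monic _ _
    (fun a _ => (Polynomial.monic_X_sub_C a).pow _)
  have hfr : Module.finrank ℂ (AdjoinRoot p) = p.natDegree :=
    (AdjoinRoot.powerBasis hpm.ne_zero).finrank
  have hdeg : p.natDegree = ∑ a ∈ Z, m a := by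
    rw [hp, Polynomial.natDegree_prod _ _
      (fun a _ => pow_ne_zero _ (Polynomial.X_sub_C_ne_zero a))]
    simp
  exact hfr.trans hdeg
end
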